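/- arXiv:0802.4459 — 2 statements merged into one kernel-verified Lean document; each statement's English description precedes it below -/
import Mathlib

section
/- For every irrational x ∈ (0,1] and every n ≥ 1, the ECF convergents satisfy |x − p_n(x)/q_n(x)| ≤ 1/q_n(x) and q_n(x) ≥ n + 1. -/
open MeasureTheory Filter

noncomputable section

/-- The ECF digit `k` of a point `x ∈ (0,1]`: `x ∈ B(k,ξ)`. -/
def ecfK (x : ℝ) : ℕ := (⌊1/x⌋ + 1).toNat / 2

/-- The ECF digit `ξ` of a point `x ∈ (0,1]`. -/
def ecfXi (x : ℝ) : ℤ := if ⌊1/x⌋ % 2 = 0 then 1 else -1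

/-- The ECF Gauss-like map `T(x) = ξ (1/x - 2k)` for `x ∈ B(k,ξ)`. -/
def ecfT (x : ℝ) : ℝ := (ecfXi x : ℝ) * (1/x - 2 * (ecfK x : ℝ))

/-- The domain: irrational points of `(0,1]`. -/
def ECFdom : Set ℝ := {x | x ∈ Set.Ioc (0:ℝ) 1 ∧ Irrational x}

/-- The `n`-th ECF digit `k_n(x)` (for `n ≥ 1`). -/
def ecfDigK (x : ℝ) (n : ℕ) : ℕ := ecfK (ecfT^[n-1] x)

/-- The `n`-th ECF digit `ξ_n(x)` (for `n ≥ 1`), with the convention `ξ_0 = 1`. -/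
def ecfDigXi (x : ℝ) (n : ℕ) : ℤ := if n = 0 then 1 else ecfXi (ecfT^[n-1] x)

/-- Numerators of continued fractions with even partial quotients built from digit
sequences `(k_n)_{n≥1}`, `(ξ_n)_{n≥0}`:
`p_n = 2 k_n p_{n-1} + ξ_{n-1} p_{n-2}`, `p_0 = 0`, `p_{-1} = 1`. -/
def cfP (k : ℕ → ℕ) (ξ : ℕ → ℤ) : ℕ → ℤ
  | 0 => 0
  | 1 => ξ 0
  | (n+2) => 2 * (k (n+2) : ℤ) * cfP k ξ (n+1) + ξ (n+1) * cfP k ξ n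

/-- Denominators: `q_n = 2 k_n q_{n-1} + ξ_{n-1} q_{n-2}`, `q_0 = 1`, `q_{-1} = 0`. -/
def cfQ (k : ℕ → ℕ) (ξ : ℕ → ℤ) : ℕ → ℤ
  | 0 => 1
  | 1 => 2 * (k 1 : ℤ)
  | (n+2) => 2 * (k (n+2) : ℤ) * cfQ k ξ (n+1) + ξ (n+1) * cfQ k ξ n

/-- The ECF convergent numerators `p_n(x)`. -/
def ecfP (x : ℝ) : ℕ → ℤ := cfP (ecfDigK x) (ecfDigXi x)

/-- The ECF convergent denominators `q_n(x)`. -/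
def ecfQ (x : ℝ) : ℕ → ℤ := cfQ (ecfDigK x) (ecfDigXi x)

/-- `τ(x) = min {j ≥ 0 : T^j(x) ∈ (0,1/2]}`. -/
def ecfTau (x : ℝ) : ℕ := sInf {j : ℕ | ecfT^[j] x ∈ Set.Ioc (0:ℝ) (1/2)}

/-- The jump transformation `R(x) = T^{τ(x)+1}(x)`. -/
def ecfR (x : ℝ) : ℝ := ecfT^[ecfTau x + 1] x

/-- `ν_0(x) = 1`, `ν_n(x) = ν_{n-1}(x) + τ(R^{n-1}(x)) + 1`. -/
def ecfNu (x : ℝ) : ℕ → ℕ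
  | 0 => 1
  | (n+1) => ecfNu x n + ecfTau (ecfR^[n] x) + 1

/-- The `R`-denominators: `q̂_0(x) = 1`, `q̂_n(x) = q_{ν_n(x)}(x)`. -/
def ecfQhat (x : ℝ) (n : ℕ) : ℤ := if n = 0 then 1 else ecfQ x (ecfNu x n)

/-- The renewal time `n̂_L(x) = min {n ≥ 1 : q̂_n(x) > L}`. -/
def ecfNhat (x : ℝ) (L : ℝ) : ℕ := sInf {n : ℕ | 1 ≤ n ∧ L < (ecfQhat x n : ℝ)}

/-- The `R`-invariant probability measure `μ`, with density
`f(x) = (1/log 3)(1/(3-x) + 1/(1+x))` on `(0,1]`. -/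
def ecfMu : Measure ℝ :=
  (volume.restrict (Set.Ioc 0 1)).withDensity
    (fun x => ENNReal.ofReal ((1/Real.log 3) * (1/(3-x) + 1/(1+x))))

/-- Σ-coding components: `h_n(x) = τ(R^{n-1}(x))`. -/
def sigmaH (x : ℝ) (n : ℕ) : ℕ := ecfTau (ecfR^[n-1] x)

/-- Σ-coding components: `m_n(x) = k_{ν_n(x)-1}(x)`. -/
def sigmaM (x : ℝ) (n : ℕ) : ℕ := ecfDigK x (ecfNu x n - 1)

/-- Σ-coding components: `ε_n(x) = ξ_{ν_n(x)-1}(x)`. -/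
def sigmaE (x : ℝ) (n : ℕ) : ℤ := ecfDigXi x (ecfNu x n - 1)

/-- The alphabet `Σ = ℕ₀ × ((ℕ × {±1}) ∖ {(1,-1)})`, as a subset of `ℕ × (ℕ × ℤ)`. -/
def SigmaSymb : Set (ℕ × (ℕ × ℤ)) :=
  {s | 1 ≤ s.2.1 ∧ ((s.2.2 = 1 ∨ s.2.2 = -1) ∧ ¬(s.2.1 = 1 ∧ s.2.2 = -1))}

/-- The full Σ-coding `σ_n(x) = (h_n, (m_n, ε_n))`. -/
def sigmaCode (x : ℝ) (n : ℕ) : ℕ × (ℕ × ℤ) := (sigmaH x n, (sigmaM x n, sigmaE x n))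

end

/-!
With the complete remainders `t n = Tⁿ x` one has `1 / t n = 2 k_{n+1} + ξ_{n+1} t_{n+1}`, and
the errors `e n = x q_n - p_n` then satisfy `e (n+1) = -ξ_{n+1} t_{n+1} e n` with `e 0 = x`.
Since `0 < t n ≤ 1` and `|ξ n| = 1`, every error is at most `1` in absolute value. As `k_n ≥ 1`,
the recursion gives `q_{n+1} - q_n ≥ q_n - q_{n-1} ≥ 1`, so `q_n ≥ n + 1`.
-/

section ContinuedFraction

variable {k : ℕ → ℕ} {ξ : ℕ → ℤ}

theorem cfQ_pos_and_lt_succ (hk : ∀ n, 1 ≤ k (n + 1)) (hξ : ∀ n, |ξ n| ≤ 1) :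
    ∀ n, 0 < cfQ k ξ n ∧ cfQ k ξ n < cfQ k ξ (n + 1)
  | 0 => by
    have := hk 0
    simp only [cfQ, zero_add] at *
    omega
  | n + 1 => by
    obtain ⟨hpos, hlt⟩ := cfQ_pos_and_lt_succ hk hξ n
    have hk' : (1 : ℤ) ≤ k (n + 2) := by exact_mod_cast hk (n + 1)
    have hξ' := abs_le.mp (hξ (n + 1))
    refine ⟨hpos.trans hlt, ?_⟩
    rw [cfQ]
    nlinarith

theorem add_one_le_cfQ (hk : ∀ n, 1 ≤ k (n + 1)) (hξ : ∀ n, |ξ n| ≤ 1) :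
    ∀ n : ℕ, (n : ℤ) + 1 ≤ cfQ k ξ n
  | 0 => by simp [cfQ]
  | n + 1 => by
    have := add_one_le_cfQ hk hξ n
    have := (cfQ_pos_and_lt_succ hk hξ n).2
    push_cast
    omega

variable (t : ℕ → ℝ) (hξ0 : ξ 0 = 1)
  (ht : ∀ n, t n * (2 * k (n + 1) + ξ (n + 1) * t (n + 1)) = 1)
include hξ0 ht

theorem cf_error_succ (n : ℕ) :
    t 0 * cfQ k ξ (n + 1) - cfP k ξ (n + 1) =
      -(ξ (n + 1) * t (n + 1)) * (t 0 * cfQ k ξ n - cfP k ξ n) := by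
  induction n with
  | zero =>
    simp only [cfQ, cfP, hξ0, zero_add] at *
    push_cast
    linear_combination ht 0
  | succ n ih =>
    have htn : t (n + 1) ≠ 0 := left_ne_zero_of_mul_eq_one (ht (n + 1))
    apply mul_left_cancel₀ htn
    simp only [cfQ, cfP]
    push_cast
    linear_combination (t 0 * cfQ k ξ (n + 1) - cfP k ξ (n + 1)) * ht (n + 1) + ih

theorem abs_cf_error_le_one (hξ : ∀ n, |ξ n| ≤ 1) (ht_abs : ∀ n, |t n| ≤ 1) (n : ℕ) :
    |t 0 * cfQ k ξ n - cfP k ξ n| ≤ 1 := by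
  induction n with
  | zero => simpa [cfQ, cfP] using ht_abs 0
  | succ n ih =>
    rw [cf_error_succ t hξ0 ht, abs_mul, abs_neg, abs_mul]
    have hξn : |(ξ (n + 1) : ℝ)| ≤ 1 := by exact_mod_cast hξ (n + 1)
    calc |(ξ (n + 1) : ℝ)| * |t (n + 1)| * |t 0 * cfQ k ξ n - cfP k ξ n|
        ≤ 1 * 1 * 1 := by gcongr; exact ht_abs (n + 1)
      _ = 1 := by norm_num

end ContinuedFraction

section EvenContinuedFraction

variable {x : ℝ}

theorem ecfXi_eq_one_or_eq_neg_one (x : ℝ) : ecfXi x = 1 ∨ ecfXi x = -1 := by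
  unfold ecfXi
  split_ifs <;> simp

theorem abs_ecfDigXi_le_one (x : ℝ) (n : ℕ) : |ecfDigXi x n| ≤ 1 := by
  unfold ecfDigXi
  split_ifs
  · simp
  · rcases ecfXi_eq_one_or_eq_neg_one (ecfT^[n - 1] x) with h | h <;> simp [h]

theorem ecfXi_mul_ecfT (x : ℝ) : (ecfXi x : ℝ) * ecfT x = 1 / x - 2 * ecfK x := by
  rcases ecfXi_eq_one_or_eq_neg_one x with h | h <;> simp [ecfT, h]

theorem one_le_ecfK (hx0 : 0 < x) (hx1 : x ≤ 1) : 1 ≤ ecfK x := by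
  have : 1 ≤ ⌊1 / x⌋ := Int.le_floor.mpr (by simpa using one_le_one_div hx0 hx1)
  unfold ecfK
  omega

theorem ecfT_eq_fract (hx : 0 < x) :
    ecfT x = if ⌊1 / x⌋ % 2 = 0 then Int.fract (1 / x) else 1 - Int.fract (1 / x) := by
  have hfl : 0 ≤ ⌊1 / x⌋ := Int.floor_nonneg.mpr (by positivity)
  have hk : (2 * ecfK x : ℤ) = if ⌊1 / x⌋ % 2 = 0 then ⌊1 / x⌋ else ⌊1 / x⌋ + 1 := by
    unfold ecfK
    split_ifs <;> omega
  unfold ecfT ecfXi Int.fract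
  split_ifs at hk ⊢
  · have hk' : (2 * ecfK x : ℝ) = ⌊1 / x⌋ := by exact_mod_cast hk
    rw [hk']
    ring
  · have hk' : (2 * ecfK x : ℝ) = ⌊1 / x⌋ + 1 := by exact_mod_cast hk
    rw [hk']
    ring

theorem mapsTo_ecfT : Set.MapsTo ecfT ECFdom ECFdom := by
  rintro x ⟨⟨hx0, -⟩, hirr⟩
  have hinv : Irrational (1 / x) := one_div x ▸ hirr.inv
  have hfract : Irrational (Int.fract (1 / x)) := hinv.sub_intCast _
  have hpos : 0 < Int.fract (1 / x) := Int.fract_pos.mpr (hinv.ne_int _)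
  have hlt := Int.fract_lt_one (1 / x)
  rw [ecfT_eq_fract hx0]
  split_ifs
  · exact ⟨⟨hpos, hlt.le⟩, hfract⟩
  · exact ⟨⟨by linarith, by linarith⟩, by simpa using hfract.natCast_sub 1⟩

theorem iterate_ecfT_mul_eq_one (hx : x ∈ ECFdom) (n : ℕ) :
    ecfT^[n] x * (2 * ecfDigK x (n + 1) + ecfDigXi x (n + 1) * ecfT^[n + 1] x) = 1 := by
  have hne : ecfT^[n] x ≠ 0 := (mapsTo_ecfT.iterate n hx).1.1.ne'
  rw [Function.iterate_succ_apply', ecfDigK, ecfDigXi, if_neg n.succ_ne_zero,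
    Nat.add_sub_cancel, ecfXi_mul_ecfT]
  field_simp
  ring

theorem add_one_le_ecfQ (hx : x ∈ ECFdom) (n : ℕ) : (n : ℤ) + 1 ≤ ecfQ x n :=
  add_one_le_cfQ (fun n => one_le_ecfK (mapsTo_ecfT.iterate n hx).1.1
    (mapsTo_ecfT.iterate n hx).1.2) (abs_ecfDigXi_le_one x) n

theorem abs_mul_ecfQ_sub_ecfP_le_one (hx : x ∈ ECFdom) (n : ℕ) :
    |x * ecfQ x n - ecfP x n| ≤ 1 :=
  abs_cf_error_le_one (fun n => ecfT^[n] x) rfl (iterate_ecfT_mul_eq_one hx)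
    (fun n => by exact_mod_cast abs_ecfDigXi_le_one x n)
    (fun n => abs_le.mpr ⟨by linarith [(mapsTo_ecfT.iterate n hx).1.1],
      (mapsTo_ecfT.iterate n hx).1.2⟩) n

end EvenContinuedFraction

/-- Approximation quality and growth of ECF denominators:
`|x - p_n/q_n| ≤ 1/q_n` and `q_n ≥ n + 1`. -/
theorem ecf_convergent_estimates :
    ∀ x ∈ ECFdom, ∀ n : ℕ, 1 ≤ n →
      |x - (ecfP x n : ℝ) / (ecfQ x n : ℝ)| ≤ 1 / (ecfQ x n : ℝ) ∧
      (n : ℤ) + 1 ≤ ecfQ x n := by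
  intro x hx n _
  have hq := add_one_le_ecfQ hx n
  have hq_pos : (0 : ℝ) < ecfQ x n := by exact_mod_cast (by omega : (0 : ℤ) < ecfQ x n)
  refine ⟨?_, hq⟩
  have hsub : x - ecfP x n / ecfQ x n = (x * ecfQ x n - ecfP x n) / ecfQ x n := by
    field_simp
  rw [hsub, abs_div, abs_of_pos hq_pos]
  gcongr
  exact abs_mul_ecfQ_sub_ecfP_le_one hx n
end

section
/- For every irrational x ∈ (0,1] and every n ≥ 4, the R-denominators satisfy q̂_n(x) ≥ 3·q̂_{n−3}(x). -/
open MeasureTheory Filter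

/-!
Each block of the jump transformation `R` ends with a digit read at a point of `(0,1/2]`, and
such a digit is never `(1,-1)`. The last step of the recursion for `q_{ν_n}` therefore either
carries `ξ_{ν_n-1} = +1`, giving `q_{ν_n} ≥ 2 q_{ν_n-1} + q_{ν_n-2}`, or has `k_{ν_n-1} ≥ 2`,
giving `q_{ν_n} ≥ q_{ν_n-1} ≥ 3 q_{ν_n-2}`; in both cases `q_{ν_n} ≥ 3 q_{ν_n-2}`. Since the
`ν_n` increase strictly and `q` is monotone, `q̂_{n-3} = q_{ν_{n-3}} ≤ q_{ν_n-2}`.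

The finiteness of `τ` comes from `T(y) = 2 - 1/y` on `(1/2,1)`, which lowers `1/(1-y)` by one.
-/

open Set

section ContinuedFraction

variable {k : ℕ → ℕ} {ξ : ℕ → ℤ}

theorem one_le_cfQ_and_cfQ_le_succ (hk : ∀ n, 1 ≤ k n) (hξ : ∀ n, -1 ≤ ξ n) (n : ℕ) :
    1 ≤ cfQ k ξ n ∧ cfQ k ξ n ≤ cfQ k ξ (n + 1) := by
  induction n with
  | zero =>
    have := hk 1
    simp only [cfQ]
    omega
  | succ n ih =>
    have hkn : (1 : ℤ) ≤ k (n + 2) := by exact_mod_cast hk (n + 2)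
    have hq : cfQ k ξ (n + 2) = 2 * k (n + 2) * cfQ k ξ (n + 1) + ξ (n + 1) * cfQ k ξ n := rfl
    refine ⟨ih.1.trans ih.2, ?_⟩
    nlinarith [hξ (n + 1)]

theorem one_le_cfQ (hk : ∀ n, 1 ≤ k n) (hξ : ∀ n, -1 ≤ ξ n) (n : ℕ) : 1 ≤ cfQ k ξ n :=
  (one_le_cfQ_and_cfQ_le_succ hk hξ n).1

theorem cfQ_monotone (hk : ∀ n, 1 ≤ k n) (hξ : ∀ n, -1 ≤ ξ n) : Monotone (cfQ k ξ) :=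
  monotone_nat_of_le_succ fun n => (one_le_cfQ_and_cfQ_le_succ hk hξ n).2

theorem three_mul_cfQ_le (hk : ∀ n, 1 ≤ k n) (hξ : ∀ n, -1 ≤ ξ n) {n : ℕ}
    (hdigit : 1 ≤ ξ (n + 2) ∨ 2 ≤ k (n + 2)) : 3 * cfQ k ξ (n + 1) ≤ cfQ k ξ (n + 3) := by
  have hq₃ : cfQ k ξ (n + 3) = 2 * k (n + 3) * cfQ k ξ (n + 2) + ξ (n + 2) * cfQ k ξ (n + 1) :=
    rfl
  have hq₂ : cfQ k ξ (n + 2) = 2 * k (n + 2) * cfQ k ξ (n + 1) + ξ (n + 1) * cfQ k ξ n := rfl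
  have hk₃ : (1 : ℤ) ≤ k (n + 3) := by exact_mod_cast hk (n + 3)
  have hq₀ := one_le_cfQ hk hξ n
  have hmono₀ := cfQ_monotone hk hξ (Nat.le_succ n)
  have hmono₁ := cfQ_monotone hk hξ (Nat.le_succ (n + 1))
  rcases hdigit with hξ₂ | hk₂
  · nlinarith
  · have hk₂' : (2 : ℤ) ≤ k (n + 2) := by exact_mod_cast hk₂
    have hthree : 3 * cfQ k ξ (n + 1) ≤ cfQ k ξ (n + 2) := by nlinarith [hξ (n + 1)]
    nlinarith [hξ (n + 2)]

end ContinuedFraction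

section SingleStep

variable {x : ℝ}

theorem ecfXi_ecfK_cases (hx : 0 < x) :
    (ecfXi x = 1 ∧ 2 * (ecfK x : ℤ) = ⌊1 / x⌋) ∨
      (ecfXi x = -1 ∧ 2 * (ecfK x : ℤ) = ⌊1 / x⌋ + 1) := by
  have hfloor : 0 ≤ ⌊1 / x⌋ := Int.floor_nonneg.mpr (by positivity)
  have hk : (ecfK x : ℤ) = (⌊1 / x⌋ + 1) / 2 := by
    simp only [ecfK]
    omega
  unfold ecfXi
  split_ifs <;> omega

theorem ecfT_eq_cases (hx : 0 < x) :
    ecfT x = 1 / x - ⌊1 / x⌋ ∨ ecfT x = ⌊1 / x⌋ + 1 - 1 / x := by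
  rcases ecfXi_ecfK_cases hx with ⟨hξ, hk⟩ | ⟨hξ, hk⟩
  · have hk' : 2 * (ecfK x : ℝ) = ⌊1 / x⌋ := by exact_mod_cast hk
    left
    rw [ecfT, hξ, hk']
    push_cast
    ring
  · have hk' : 2 * (ecfK x : ℝ) = ⌊1 / x⌋ + 1 := by exact_mod_cast hk
    right
    rw [ecfT, hξ, hk']
    push_cast
    ring

theorem one_le_ecfK_s5 (hx₀ : 0 < x) (hx₁ : x ≤ 1) : 1 ≤ ecfK x := by
  have : 1 ≤ ⌊1 / x⌋ := Int.le_floor.mpr (by push_cast; rwa [le_div_iff₀ hx₀, one_mul])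
  rcases ecfXi_ecfK_cases hx₀ with ⟨-, hk⟩ | ⟨-, hk⟩ <;> omega

theorem ecfXi_eq_one_or_two_le_ecfK (hx₀ : 0 < x) (hx : x ≤ 1 / 2) :
    ecfXi x = 1 ∨ 2 ≤ ecfK x := by
  have : 2 ≤ ⌊1 / x⌋ := Int.le_floor.mpr (by push_cast; rw [le_div_iff₀ hx₀]; linarith)
  rcases ecfXi_ecfK_cases hx₀ with ⟨hξ, -⟩ | ⟨-, hk⟩
  · exact Or.inl hξ
  · right
    omega

theorem neg_one_le_ecfXi (x : ℝ) : -1 ≤ ecfXi x := by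
  unfold ecfXi
  split_ifs <;> norm_num

theorem ecfT_eq_two_sub_inv (hx₀ : 1 / 2 < x) (hx₁ : x < 1) : ecfT x = 2 - 1 / x := by
  have hpos : 0 < x := by linarith
  have hfloor : ⌊1 / x⌋ = 1 := by
    rw [Int.floor_eq_iff]
    constructor
    · rw [Int.cast_one, le_div_iff₀ hpos]
      linarith
    · rw [Int.cast_one, div_lt_iff₀ hpos]
      linarith
  rcases ecfXi_ecfK_cases hpos with ⟨-, hk⟩ | ⟨hξ, hk⟩
  · omega
  · have hk₁ : ecfK x = 1 := by omega
    rw [ecfT, hξ, hk₁]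
    push_cast
    ring

theorem ecfT_mapsTo : MapsTo ecfT ECFdom ECFdom := by
  rintro x ⟨⟨hx₀, -⟩, hirr⟩
  have hinv : Irrational (1 / x) := by rw [one_div]; exact hirr.inv
  have hlow : (⌊1 / x⌋ : ℝ) < 1 / x := (Int.floor_le _).lt_of_ne (hinv.ne_int _).symm
  have hhigh : 1 / x < ⌊1 / x⌋ + 1 := Int.lt_floor_add_one _
  rcases ecfT_eq_cases hx₀ with h | h <;> rw [h]
  · exact ⟨⟨by linarith, by linarith⟩, irrational_sub_intCast_iff.mpr hinv⟩
  · refine ⟨⟨by linarith, by linarith⟩, ?_⟩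
    rw [show (⌊1 / x⌋ : ℝ) + 1 - 1 / x = ((⌊1 / x⌋ + 1 : ℤ) : ℝ) - 1 / x by push_cast; ring]
    exact irrational_intCast_sub_iff.mpr hinv

end SingleStep

section Orbit

variable {x : ℝ}

theorem lt_one_of_mem_ECFdom (hx : x ∈ ECFdom) : x < 1 :=
  hx.1.2.lt_of_ne fun h => hx.2.ne_one h

theorem ecfT_iterate_mem (hx : x ∈ ECFdom) (m : ℕ) : ecfT^[m] x ∈ ECFdom :=
  ecfT_mapsTo.iterate m hx

theorem one_le_ecfDigK (hx : x ∈ ECFdom) (n : ℕ) : 1 ≤ ecfDigK x n :=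
  one_le_ecfK_s5 (ecfT_iterate_mem hx _).1.1 (ecfT_iterate_mem hx _).1.2

theorem neg_one_le_ecfDigXi (x : ℝ) (n : ℕ) : -1 ≤ ecfDigXi x n := by
  unfold ecfDigXi
  split_ifs
  · norm_num
  · exact neg_one_le_ecfXi _

theorem one_div_one_sub_ecfT (hx₀ : 1 / 2 < x) (hx₁ : x < 1) :
    1 / (1 - ecfT x) = 1 / (1 - x) - 1 := by
  have hx : x ≠ 0 := by linarith
  have hx' : 1 - x ≠ 0 := by linarith
  rw [ecfT_eq_two_sub_inv hx₀ hx₁,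
    show (1 : ℝ) - (2 - 1 / x) = (1 - x) / x by field_simp; ring, one_div_div, div_sub_one hx']
  ring

theorem exists_ecfT_iterate_mem_Ioc (hx : x ∈ ECFdom) :
    ∃ j, ecfT^[j] x ∈ Ioc (0 : ℝ) (1 / 2) := by
  by_contra! hnever
  have hhalf : ∀ j, 1 / 2 < ecfT^[j] x := fun j =>
    not_le.mp fun hle => hnever j ⟨(ecfT_iterate_mem hx j).1.1, hle⟩
  have hdrift : ∀ j : ℕ, 1 / (1 - ecfT^[j] x) = 1 / (1 - x) - j := by
    intro j
    induction j with
    | zero => simp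
    | succ j ih =>
      rw [Function.iterate_succ_apply',
        one_div_one_sub_ecfT (hhalf j) (lt_one_of_mem_ECFdom (ecfT_iterate_mem hx j)), ih]
      push_cast
      ring
  obtain ⟨j, hj⟩ := exists_nat_ge (1 / (1 - x))
  have : 0 < 1 - ecfT^[j] x := sub_pos.mpr (lt_one_of_mem_ECFdom (ecfT_iterate_mem hx j))
  have : 0 < 1 / (1 - ecfT^[j] x) := by positivity
  linarith [hdrift j]

theorem ecfT_iterate_ecfTau_mem (hx : x ∈ ECFdom) :
    ecfT^[ecfTau x] x ∈ Ioc (0 : ℝ) (1 / 2) :=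
  Nat.sInf_mem (exists_ecfT_iterate_mem_Ioc hx)

theorem add_le_ecfNu_add (a b : ℕ) : ecfNu x a + b ≤ ecfNu x (a + b) := by
  induction b with
  | zero => rfl
  | succ b ih =>
    show ecfNu x a + (b + 1) ≤ ecfNu x (a + b + 1)
    rw [ecfNu.eq_2]
    omega

theorem lt_ecfNu (n : ℕ) : n < ecfNu x n := by
  simpa [ecfNu, add_comm] using add_le_ecfNu_add (x := x) 0 n

theorem ecfR_iterate_eq (n : ℕ) : ecfR^[n] x = ecfT^[ecfNu x n - 1] x := by
  induction n with
  | zero => rfl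
  | succ n ih =>
    have := lt_ecfNu (x := x) n
    rw [Function.iterate_succ_apply', ecfR, ecfNu.eq_2, ih, ← Function.iterate_add_apply]
    congr 1
    omega

theorem ecfT_iterate_ecfNu_sub_two_mem (hx : x ∈ ECFdom) (n : ℕ) :
    ecfT^[ecfNu x (n + 1) - 2] x ∈ Ioc (0 : ℝ) (1 / 2) := by
  have hRn : ecfR^[n] x ∈ ECFdom := by
    rw [ecfR_iterate_eq]
    exact ecfT_iterate_mem hx _
  have hmem := ecfT_iterate_ecfTau_mem hRn
  have := lt_ecfNu (x := x) n
  rw [ecfR_iterate_eq, ← Function.iterate_add_apply] at hmem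
  convert hmem using 2
  rw [ecfNu.eq_2, ecfR_iterate_eq]
  omega

end Orbit

/-- `q̂_n(x) ≥ 3 q̂_{n-3}(x)` for `n ≥ 4`. -/
theorem ecfQhat_three_step :
    ∀ x ∈ ECFdom, ∀ n : ℕ, 4 ≤ n → 3 * ecfQhat x (n - 3) ≤ ecfQhat x n := by
  intro x hx n hn
  obtain ⟨m, rfl⟩ : ∃ m, n = m + 4 := ⟨n - 4, by omega⟩
  have hgap : ecfNu x (m + 1) + 3 ≤ ecfNu x (m + 4) := add_le_ecfNu_add _ _
  obtain ⟨l, hl⟩ : ∃ l, ecfNu x (m + 4) = l + 3 := ⟨ecfNu x (m + 4) - 3, by omega⟩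
  have hgood := ecfT_iterate_ecfNu_sub_two_mem hx (m + 3)
  rw [hl, show l + 3 - 2 = l + 1 by omega] at hgood
  have hdigit : 1 ≤ ecfDigXi x (l + 2) ∨ 2 ≤ ecfDigK x (l + 2) := by
    rcases ecfXi_eq_one_or_two_le_ecfK hgood.1 hgood.2 with h | h
    · exact Or.inl (show 1 ≤ ecfXi (ecfT^[l + 1] x) from h.ge)
    · exact Or.inr h
  have hk := one_le_ecfDigK hx
  have hξ := neg_one_le_ecfDigXi x
  calc 3 * ecfQhat x (m + 4 - 3)
      = 3 * ecfQ x (ecfNu x (m + 1)) := rfl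
    _ ≤ 3 * ecfQ x (l + 1) := by gcongr; exact cfQ_monotone hk hξ (by omega)
    _ ≤ ecfQ x (l + 3) := three_mul_cfQ_le hk hξ hdigit
    _ = ecfQhat x (m + 4) := by rw [← hl]; rfl
end
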